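/- arXiv:1503.01155 — 2 statements merged into one kernel-verified Lean document; each statement's English description precedes it below -/
import Mathlib

section
/- Let K ⊆ 𝓛 and let p : [0,∞) → S_𝓖 be a differentiable solution of the recombination dynamics. Then the projection p_K(t) ∈ ℝ^{𝓖_K} satisfies the projected recombination dynamics with cumulative rate constants: d p_K/dt = Σ_{{I',J'} ∈ 𝓟_K} c̄({I',J'}) (p_{I'} ⊗ p_{J'} − p_K), where 𝓟_K = {{I',J'} : I' ⊆ K, J' = K ∖ I'}, the cumulative rate constant is c̄({I',J'}) = Σ_{{I,J} ∈ 𝓟 : I ∩ K and J ∩ K partition as {I',J'}} c({I,J}), and (p_{I'} ⊗ p_{J'})(u) = p_{I'}(u|_{I'}) · p_{J'}(u|_{J'}) for u ∈ 𝓖_K. -/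
open Finset

/-- Recombination of gametes `g` and `h` following pattern `{I, Iᶜ}`:
`(g_I h_J)ᵢ = gᵢ` for `i ∈ I` and `= hᵢ` for `i ∈ J = Iᶜ`. -/
def recomb {L : Type} [DecidableEq L] {A : L → Type} (I : Finset L)
    (g h : ∀ i, A i) : ∀ i, A i :=
  fun i => if i ∈ I then g i else h i

/-- The recombination vector field
`F(p) = (1/2) Σ_{g,h} Σ_{{I,J} ∈ 𝓟} c({I,J}) p(g) p(h) (g_I h_J + g_J h_I − g − h)`,
where the sum over unordered patterns `{I,J}` is written as `(1/2) Σ_{I : Finset L}`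
(every unordered pattern `{I, Iᶜ}` corresponds to exactly two subsets `I` and `Iᶜ`;
the rate constants satisfy `c I = c Iᶜ`). -/
noncomputable def recF {L : Type} [Fintype L] [DecidableEq L] {A : L → Type}
    [∀ i, Fintype (A i)] [∀ i, DecidableEq (A i)]
    (c : Finset L → ℝ) (p : (∀ i, A i) → ℝ) : (∀ i, A i) → ℝ :=
  fun x => (1 / 4) * ∑ g : ∀ i, A i, ∑ h : ∀ i, A i, ∑ I : Finset L,
    c I * p g * p h *
      ((if x = recomb I g h then 1 else 0) + (if x = recomb Iᶜ g h then 1 else 0)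
        - (if x = g then 1 else 0) - (if x = h then 1 else 0))

/-- The projection `p_K ∈ ℝ^{𝓖_K}` of `p ∈ ℝ^𝓖` on the loci `K ⊆ 𝓛`:
`p_K(u) = Σ_{g : g|_K = u} p(g)`. -/
noncomputable def proj {L : Type} [Fintype L] [DecidableEq L] {A : L → Type}
    [∀ i, Fintype (A i)] [∀ i, DecidableEq (A i)]
    (p : (∀ i, A i) → ℝ) (K : Finset L) : (∀ i : {x // x ∈ K}, A i.1) → ℝ :=
  fun u => ∑ g : ∀ i, A i, if (∀ i : {x // x ∈ K}, g i.1 = u i) then p g else 0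

/-- For `I' ⊆ K`, the value `p_{I'}(u|_{I'})` of the projection of `p` on the loci `I'`
at the restriction of `u ∈ 𝓖_K`: the sum of `p(g)` over all gametes `g` agreeing with `u`
on `I'`. -/
noncomputable def projOn {L : Type} [Fintype L] [DecidableEq L] {A : L → Type}
    [∀ i, Fintype (A i)] [∀ i, DecidableEq (A i)]
    (p : (∀ i, A i) → ℝ) (K I' : Finset L) (u : ∀ i : {x // x ∈ K}, A i.1) : ℝ :=
  ∑ g : ∀ i, A i, if (∀ i : {x // x ∈ K}, i.1 ∈ I' → g i.1 = u i) then p g else 0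

/-!
Projection to the loci `K` is linear, so `p_K` is differentiable with derivative the
projection of the recombination vector field, which is evaluated pointwise. An offspring
`g_I h_J` agrees with `u ∈ 𝓖_K` on `K` exactly when `g` agrees with `u` on `I ∩ K` and `h` on
`K ∖ I`, so the gain term of pattern `I` factorises into `p_{I ∩ K}(u) p_{K ∖ I}(u)`, while each
loss term is `p_K(u) · Σ p = p_K(u)`. Grouping the patterns `I` by their trace `I ∩ K` gives the
cumulative rate constants.
-/
theorem recomb_compl {L : Type} [Fintype L] [DecidableEq L] {A : L → Type} (I : Finset L)
    (g h : ∀ i, A i) : recomb Iᶜ g h = recomb I h g := by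
  ext i
  by_cases hi : i ∈ I <;> simp [recomb, hi]

section Agrees

variable {L : Type} [DecidableEq L] {A : L → Type}

def Agrees (K I' : Finset L) (u : ∀ i : {x // x ∈ K}, A i.1) (g : ∀ i, A i) : Prop :=
  ∀ i : {x // x ∈ K}, i.1 ∈ I' → g i.1 = u i

instance [∀ i, DecidableEq (A i)] (K I' : Finset L) (u : ∀ i : {x // x ∈ K}, A i.1)
    (g : ∀ i, A i) : Decidable (Agrees K I' u g) :=
  inferInstanceAs (Decidable (∀ i : {x // x ∈ K}, i.1 ∈ I' → g i.1 = u i))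

theorem agrees_recomb {K J I : Finset L} {u : ∀ i : {x // x ∈ K}, A i.1} {g h : ∀ i, A i} :
    Agrees K J u (recomb I g h) ↔ Agrees K (I ∩ J) u g ∧ Agrees K (J \ I) u h := by
  simp only [Agrees, recomb, mem_inter, mem_sdiff]
  constructor
  · intro H
    exact ⟨fun i hi => by simpa [hi.1] using H i hi.2,
      fun i hi => by simpa [hi.2] using H i hi.1⟩
  · rintro ⟨Hg, Hh⟩ i hi
    by_cases hI : i.1 ∈ I
    · simpa [hI] using Hg i ⟨hI, hi⟩
    · simpa [hI] using Hh i ⟨hi, hI⟩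

end Agrees

theorem sum_mul_inter_eq_sum_powerset {L : Type} [Fintype L] [DecidableEq L]
    (c f : Finset L → ℝ) (K : Finset L) :
    ∑ I, c I * f (I ∩ K) =
      ∑ I' ∈ K.powerset, (∑ I ∈ univ.filter (fun I : Finset L => I ∩ K = I'), c I) * f I' := by
  rw [← sum_fiberwise_of_maps_to (g := (· ∩ K)) fun I _ => mem_powerset.2 inter_subset_right]
  refine sum_congr rfl fun I' _ => ?_
  rw [sum_mul]
  exact sum_congr rfl fun I hI => by rw [(mem_filter.1 hI).2]

variable {L : Type} [Fintype L] [DecidableEq L] {A : L → Type}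
  [∀ i, Fintype (A i)] [∀ i, DecidableEq (A i)]

theorem proj_eq_projOn_self (q : (∀ i, A i) → ℝ) (K : Finset L)
    (u : ∀ i : {x // x ∈ K}, A i.1) : proj q K u = projOn q K K u := by
  simp [proj, projOn]

theorem projOn_eq_sum_mul (q : (∀ i, A i) → ℝ) (K I' : Finset L)
    (u : ∀ i : {x // x ∈ K}, A i.1) :
    projOn q K I' u = ∑ g, q g * if Agrees K I' u g then 1 else 0 := by
  simp [projOn, Agrees]

noncomputable def projOnₗ (K I' : Finset L) (u : ∀ i : {x // x ∈ K}, A i.1) :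
    ((∀ i, A i) → ℝ) →ₗ[ℝ] ℝ where
  toFun q := projOn q K I' u
  map_add' q r := by simp only [projOn_eq_sum_mul, Pi.add_apply, add_mul, sum_add_distrib]
  map_smul' a q := by
    simp only [projOn_eq_sum_mul, Pi.smul_apply, smul_eq_mul, mul_assoc, mul_sum,
      RingHom.id_apply]

theorem projOnₗ_apply (K I' : Finset L) (u : ∀ i : {x // x ∈ K}, A i.1)
    (q : (∀ i, A i) → ℝ) :
    projOnₗ K I' u q = projOn q K I' u :=
  rfl

theorem projOn_single (y : ∀ i, A i) (K I' : Finset L) (u : ∀ i : {x // x ∈ K}, A i.1) :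
    projOn (Pi.single y 1) K I' u = if Agrees K I' u y then 1 else 0 := by
  simp only [projOn_eq_sum_mul, Pi.single_apply, ite_mul, one_mul, zero_mul, sum_ite_eq',
    mem_univ, if_true]

theorem HasDerivAt.projOn {p : ℝ → (∀ i, A i) → ℝ} {p' : (∀ i, A i) → ℝ} {t : ℝ}
    (hp : HasDerivAt p p' t) (K I' : Finset L) (u : ∀ i : {x // x ∈ K}, A i.1) :
    HasDerivAt (fun s => projOn (p s) K I' u) (projOn p' K I' u) t :=
  (projOnₗ K I' u).toContinuousLinearMap.hasFDerivAt.comp_hasDerivAt t hp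

theorem recF_eq_sum (c : Finset L → ℝ) (q : (∀ i, A i) → ℝ) :
    recF c q = (1 / 4 : ℝ) • ∑ g, ∑ h, ∑ I, (c I * q g * q h) •
      (Pi.single (recomb I g h) 1 + Pi.single (recomb Iᶜ g h) 1
        - Pi.single g 1 - Pi.single h 1) := by
  ext x
  simp [recF, Finset.sum_apply, Pi.single_apply]

theorem sum_sum_mul_agrees_recomb (q : (∀ i, A i) → ℝ) (K J I : Finset L)
    (u : ∀ i : {x // x ∈ K}, A i.1) :
    ∑ g, ∑ h, q g * q h * (if Agrees K J u (recomb I g h) then 1 else 0) =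
      projOn q K (I ∩ J) u * projOn q K (J \ I) u := by
  simp only [projOn_eq_sum_mul, sum_mul_sum, agrees_recomb, ite_and]
  exact sum_congr rfl fun g _ => sum_congr rfl fun h _ => by split_ifs <;> ring

theorem projOn_recF (c : Finset L → ℝ) {q : (∀ i, A i) → ℝ} (hq : ∑ g, q g = 1)
    (K J : Finset L) (u : ∀ i : {x // x ∈ K}, A i.1) :
    projOn (recF c q) K J u =
      (1 / 2) * ∑ I, c I * (projOn q K (I ∩ J) u * projOn q K (J \ I) u - projOn q K J u) := by
  set χ : (∀ i, A i) → ℝ := fun y => if Agrees K J u y then 1 else 0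
  have hχ : ∑ g, q g * χ g = projOn q K J u := (projOn_eq_sum_mul q K J u).symm
  have hpair : ∀ I, ∑ g, ∑ h, q g * q h * (χ (recomb I g h) + χ (recomb I h g) - χ g - χ h) =
      2 * (projOn q K (I ∩ J) u * projOn q K (J \ I) u - projOn q K J u) := by
    intro I
    have hswap : ∑ g, ∑ h, q g * q h * χ (recomb I h g) =
        ∑ g, ∑ h, q g * q h * χ (recomb I g h) := by
      rw [sum_comm]; simp only [mul_comm (q _) (q _)]
    have hleft : ∑ g, ∑ h, q g * q h * χ g = projOn q K J u := by
      rw [← hχ, ← mul_one (∑ g, q g * χ g), ← hq, sum_mul_sum]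
      exact sum_congr rfl fun g _ => sum_congr rfl fun h _ => by ring
    have hright : ∑ g, ∑ h, q g * q h * χ h = projOn q K J u := by
      rw [← hχ, ← one_mul (∑ h, q h * χ h), ← hq, sum_mul_sum]
      exact sum_congr rfl fun g _ => sum_congr rfl fun h _ => by ring
    simp only [mul_add, mul_sub, sum_add_distrib, sum_sub_distrib, hswap, hleft, hright]
    rw [sum_sum_mul_agrees_recomb]
    ring
  calc projOn (recF c q) K J u
      = (1 / 4) * ∑ g, ∑ h, ∑ I, c I * (q g * q h *
          (χ (recomb I g h) + χ (recomb I h g) - χ g - χ h)) := by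
        rw [recF_eq_sum]
        change projOnₗ K J u _ = _
        simp only [map_smul, map_sum, map_add, map_sub, smul_eq_mul, projOnₗ_apply,
          projOn_single, recomb_compl, mul_sum, mul_assoc, χ]
    _ = (1 / 4) * ∑ I, c I * ∑ g, ∑ h, q g * q h *
          (χ (recomb I g h) + χ (recomb I h g) - χ g - χ h) := by
        simp only [mul_sum]
        conv_lhs => arg 2; ext g; rw [sum_comm]
        rw [sum_comm]
    _ = (1 / 2) * ∑ I, c I * (projOn q K (I ∩ J) u * projOn q K (J \ I) u - projOn q K J u) := by
        simp only [hpair, mul_sum]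
        exact sum_congr rfl fun I _ => by ring

theorem projected_dynamics_general
    {L : Type} [Fintype L] [DecidableEq L]
    (A : L → Type) [∀ i, Fintype (A i)] [∀ i, DecidableEq (A i)]
    (c : Finset L → ℝ)
    (K : Finset L)
    (p : ℝ → (∀ i, A i) → ℝ)
    (hsimplex : ∀ t, 0 ≤ t → (∀ g, 0 ≤ p t g) ∧ ∑ g : ∀ i, A i, p t g = 1)
    (hode : ∀ t, 0 ≤ t → HasDerivAt p (recF c (p t)) t) :
    ∀ t, 0 ≤ t →
      HasDerivAt (fun s => proj (p s) K)
        (fun u => (1 / 2) * ∑ I' ∈ K.powerset,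
          (∑ I ∈ univ.filter (fun I : Finset L => I ∩ K = I'), c I)
            * (projOn (p t) K I' u * projOn (p t) K (K \ I') u - proj (p t) K u)) t := by
  intro t ht
  refine hasDerivAt_pi.2 fun u => ?_
  simp only [proj_eq_projOn_self]
  refine ((hode t ht).projOn K K u).congr_deriv ?_
  rw [projOn_recF c (hsimplex t ht).2, ← sum_mul_inter_eq_sum_powerset]
  simp only [sdiff_inter_self_right]

/-- **The projected dynamics (projection on a subset `K` of loci).**
Along a differentiable solution of the recombination dynamics in the simplex, the
projection `p_K` satisfies the projected recombination dynamics with cumulative rate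
constants: `d p_K/dt = Σ_{{I',J'} ∈ 𝓟_K} c̄({I',J'}) (p_{I'} ⊗ p_{J'} − p_K)`, where
`c̄({I',J'}) = Σ_{{I,J} ∈ 𝓟 : {I,J} ≥ {I',J'}} c({I,J})`; the sum over unordered
subpatterns `{I', K \ I'}` is written as `(1/2) Σ_{I' ⊆ K}`, with the cumulative rate
constant of `I' ⊆ K` given by `Σ_{I : I ∩ K = I'} c(I)`. -/
theorem projected_dynamics
    {L : Type} [Fintype L] [DecidableEq L]
    (A : L → Type) [∀ i, Fintype (A i)] [∀ i, DecidableEq (A i)]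
    (c : Finset L → ℝ) (hc : ∀ I, 0 ≤ c I) (hcsym : ∀ I, c I = c Iᶜ)
    (K : Finset L)
    (p : ℝ → (∀ i, A i) → ℝ)
    (hsimplex : ∀ t, 0 ≤ t → (∀ g, 0 ≤ p t g) ∧ ∑ g : ∀ i, A i, p t g = 1)
    (hode : ∀ t, 0 ≤ t → HasDerivAt p (recF c (p t)) t) :
    ∀ t, 0 ≤ t →
      HasDerivAt (fun s => proj (p s) K)
        (fun u => (1 / 2) * ∑ I' ∈ K.powerset,
          (∑ I ∈ univ.filter (fun I : Finset L => I ∩ K = I'), c I)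
            * (projOn (p t) K I' u * projOn (p t) K (K \ I') u - proj (p t) K u)) t :=
  projected_dynamics_general A c K p hsimplex hode
end

section
/- Under the standing assumption, if p : [0,∞) → ℝ^𝓖_{≥0} is a differentiable solution of the recombination dynamics whose initial condition p(0) ∈ S_𝓖 has all marginals positive (p(0)ᵢ(a) > 0 for every locus i and allele a ∈ 𝓐ᵢ), then p(t) ∈ ℝ^𝓖_{>0} for all t > 0; i.e., as long as all alleles are present in the population, recombination immediately produces all gametes with positive frequency. -/
/-!
For a set of loci `I` and a gamete `x`, write `p_I(x)` for the frequency of gametes that agree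
with `x` on `I`. The recombination equation closes on these marginals: with total mass one,
`d/dt p_I = ½ ∑_J c_J (p_{I∩J} p_{I∖J} - p_I)`. So `p_∅ = 1` and the one-locus marginals are
constant, hence positive. If `I` contains two loci, the standing assumption gives a pattern `J`
with `c_J > 0` that splits `I` into two strictly smaller parts, positive for `t > 0` by induction;
then `d/dt p_I > -K p_I` with `K = ½ ∑_J c_J`, so `e^{Kt} p_I(t)` increases strictly from a
nonnegative value. For `I = 𝓛` this is the frequency of `x` itself.
-/

open Finset

/-- The marginal frequency `pᵢ(a) = Σ_{g : gᵢ = a} p(g)`. -/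
noncomputable def marg {L : Type} [Fintype L] [DecidableEq L] {A : L → Type}
    [∀ i, Fintype (A i)] [∀ i, DecidableEq (A i)]
    (p : (∀ i, A i) → ℝ) (i : L) (a : A i) : ℝ :=
  ∑ g : ∀ j, A j, if g i = a then p g else 0


section Indicator

variable {L : Type} {A : L → Type} [∀ i, DecidableEq (A i)]

noncomputable def agreeIndicator (I : Finset L) (x g : ∀ i, A i) : ℝ :=
  if ∀ i ∈ I, g i = x i then 1 else 0

lemma agreeIndicator_nonneg (I : Finset L) (x g : ∀ i, A i) : 0 ≤ agreeIndicator I x g := by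
  unfold agreeIndicator; split <;> norm_num

lemma agreeIndicator_recomb [DecidableEq L] (I J : Finset L) (x g h : ∀ i, A i) :
    agreeIndicator I x (recomb J g h) =
      agreeIndicator (I ∩ J) x g * agreeIndicator (I \ J) x h := by
  simp only [agreeIndicator, ite_zero_mul_ite_zero, mul_one]
  congr 1
  simp only [recomb, ite_eq_iff', mem_inter, mem_sdiff, and_imp, ← forall_and]

end Indicator

section Marginal

variable {L : Type} [Fintype L] [DecidableEq L] {A : L → Type}
  [∀ i, Fintype (A i)] [∀ i, DecidableEq (A i)]

noncomputable def marginalOn (q : (∀ i, A i) → ℝ) (I : Finset L) (x : ∀ i, A i) : ℝ :=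
  ∑ g, agreeIndicator I x g * q g

lemma marginalOn_nonneg {q : (∀ i, A i) → ℝ} (hq : ∀ g, 0 ≤ q g) (I : Finset L)
    (x : ∀ i, A i) : 0 ≤ marginalOn q I x :=
  sum_nonneg fun g _ => mul_nonneg (agreeIndicator_nonneg I x g) (hq g)

lemma marginalOn_empty (q : (∀ i, A i) → ℝ) (x : ∀ i, A i) :
    marginalOn q ∅ x = ∑ g, q g := by
  simp [marginalOn, agreeIndicator]

lemma marginalOn_singleton (q : (∀ i, A i) → ℝ) (i : L) (x : ∀ i, A i) :
    marginalOn q {i} x = marg q i (x i) := by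
  simp [marginalOn, marg, agreeIndicator, ite_mul]

lemma marginalOn_univ (q : (∀ i, A i) → ℝ) (x : ∀ i, A i) :
    marginalOn q univ x = q x := by
  simp [marginalOn, agreeIndicator, ← funext_iff, ite_mul]

lemma sum_sum_mul_agreeIndicator_recomb (q : (∀ i, A i) → ℝ) (I J : Finset L)
    (x : ∀ i, A i) :
    ∑ g, ∑ h, q g * q h * agreeIndicator I x (recomb J g h) =
      marginalOn q (I ∩ J) x * marginalOn q (I \ J) x := by
  simp only [agreeIndicator_recomb, marginalOn, sum_mul_sum]
  exact sum_congr rfl fun g _ => sum_congr rfl fun h _ => by ring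

lemma sum_mul_recF (c : Finset L → ℝ) (q w : (∀ i, A i) → ℝ) :
    ∑ x, w x * recF c q x = (1 / 4) * ∑ g, ∑ h, ∑ J, c J * q g * q h *
      (w (recomb J g h) + w (recomb Jᶜ g h) - w g - w h) := by
  have eval : ∀ y, ∑ x, w x * (if x = y then 1 else 0) = w y := by simp
  simp only [recF, mul_sum]
  rw [sum_comm]; refine sum_congr rfl fun g _ => ?_
  rw [sum_comm]; refine sum_congr rfl fun h _ => ?_
  rw [sum_comm]; refine sum_congr rfl fun J _ => ?_
  simp only [mul_left_comm (w _), ← mul_sum, mul_add, mul_sub, sum_add_distrib, sum_sub_distrib,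
    eval]

lemma sum_recF (c : Finset L → ℝ) (q : (∀ i, A i) → ℝ) : ∑ x, recF c q x = 0 := by
  simpa using sum_mul_recF c q 1

lemma marginalOn_recF (c : Finset L → ℝ) (q : (∀ i, A i) → ℝ) (I : Finset L)
    (x : ∀ i, A i) :
    marginalOn (recF c q) I x = (1 / 2) * ∑ J, c J *
      (marginalOn q (I ∩ J) x * marginalOn q (I \ J) x - marginalOn q I x * ∑ g, q g) := by
  have hleft : ∑ g, ∑ h, q g * q h * agreeIndicator I x g = marginalOn q I x * ∑ h, q h := by
    simp only [marginalOn, sum_mul_sum]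
    exact sum_congr rfl fun g _ => sum_congr rfl fun h _ => by ring
  have hright : ∑ g, ∑ h, q g * q h * agreeIndicator I x h = marginalOn q I x * ∑ g, q g := by
    rw [sum_comm, ← hleft]
    exact sum_congr rfl fun g _ => sum_congr rfl fun h _ => by ring
  have per_pattern : ∀ J, ∑ g, ∑ h, c J * q g * q h * (agreeIndicator I x (recomb J g h) +
      agreeIndicator I x (recomb Jᶜ g h) - agreeIndicator I x g - agreeIndicator I x h) =
      2 * (c J * (marginalOn q (I ∩ J) x * marginalOn q (I \ J) x -
        marginalOn q I x * ∑ g, q g)) := by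
    intro J
    have hJ := sum_sum_mul_agreeIndicator_recomb q I J x
    have hJc := sum_sum_mul_agreeIndicator_recomb q I Jᶜ x
    rw [← sdiff_eq_inter_compl, sdiff_compl, inf_eq_inter] at hJc
    calc _ = c J * (∑ g, ∑ h, q g * q h * agreeIndicator I x (recomb J g h) +
          ∑ g, ∑ h, q g * q h * agreeIndicator I x (recomb Jᶜ g h) -
          ∑ g, ∑ h, q g * q h * agreeIndicator I x g -
          ∑ g, ∑ h, q g * q h * agreeIndicator I x h) := by
          simp only [mul_sum, ← sum_add_distrib, ← sum_sub_distrib]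
          exact sum_congr rfl fun g _ => sum_congr rfl fun h _ => by ring
      _ = _ := by rw [hJ, hJc, hleft, hright]; ring
  rw [marginalOn, sum_mul_recF]
  conv_lhs => arg 2; arg 2; ext g; rw [sum_comm]
  rw [sum_comm]
  simp only [per_pattern, ← mul_sum]
  ring

end Marginal

lemma pos_of_hasDerivAt_of_neg_mul_lt {f f' : ℝ → ℝ} {K t : ℝ} (ht : 0 < t) (hf0 : 0 ≤ f 0)
    (hf : ∀ s ∈ Set.Icc 0 t, HasDerivAt f (f' s) s)
    (hf' : ∀ s ∈ Set.Ioo 0 t, -(K * f s) < f' s) : 0 < f t := by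
  have hF : ∀ s ∈ Set.Icc 0 t, HasDerivAt (fun u => Real.exp (K * u) * f u)
      (Real.exp (K * s) * (K * f s + f' s)) s := fun s hs => by
    have hexp : HasDerivAt (fun u => Real.exp (K * u)) (Real.exp (K * s) * K) s := by
      simpa using ((hasDerivAt_id s).const_mul K).exp
    exact (hexp.mul (hf s hs)).congr_deriv (by ring)
  have hmono : StrictMonoOn (fun u => Real.exp (K * u) * f u) (Set.Icc 0 t) := by
    refine strictMonoOn_of_deriv_pos (convex_Icc 0 t)
      (fun s hs => (hF s hs).continuousAt.continuousWithinAt) fun s hs => ?_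
    rw [interior_Icc] at hs
    rw [(hF s (Set.Ioo_subset_Icc_self hs)).deriv]
    exact mul_pos (Real.exp_pos _) (by linarith [hf' s hs])
  have hlt := hmono (Set.left_mem_Icc.mpr ht.le) (Set.right_mem_Icc.mpr ht.le) ht
  simp only [mul_zero, Real.exp_zero, one_mul] at hlt
  exact pos_of_mul_pos_right (hf0.trans_lt hlt) (Real.exp_pos _).le

lemma eq_of_hasDerivAt_zero {f : ℝ → ℝ} (hf : ∀ s, 0 ≤ s → HasDerivAt f 0 s) {t : ℝ}
    (ht : 0 ≤ t) : f t = f 0 :=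
  constant_of_has_deriv_right_zero (fun s hs => (hf s hs.1).continuousAt.continuousWithinAt)
    (fun s hs => (hf s hs.1).hasDerivWithinAt) t (Set.right_mem_Icc.mpr ht)

section Dynamics

variable {L : Type} [Fintype L] [DecidableEq L] {A : L → Type}
  [∀ i, Fintype (A i)] [∀ i, DecidableEq (A i)]
  {c : Finset L → ℝ} {p : ℝ → (∀ i, A i) → ℝ}

lemma HasDerivAt.marginalOn {p' : (∀ i, A i) → ℝ} {t : ℝ} (hp : HasDerivAt p p' t)
    (I : Finset L) (x : ∀ i, A i) :
    HasDerivAt (fun s => marginalOn (p s) I x) (marginalOn p' I x) t :=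
  HasDerivAt.fun_sum fun g _ => (hasDerivAt_pi.mp hp g).const_mul _

lemma sum_eq_of_recF (hode : ∀ t, 0 ≤ t → HasDerivAt p (recF c (p t)) t) {t : ℝ}
    (ht : 0 ≤ t) : ∑ g, p t g = ∑ g, p 0 g := by
  refine eq_of_hasDerivAt_zero (f := fun s => ∑ g, p s g) (fun s hs => ?_) ht
  rw [← sum_recF c (p s)]
  exact HasDerivAt.fun_sum fun g _ => hasDerivAt_pi.mp (hode s hs) g

lemma marginalOn_singleton_eq_of_recF (hode : ∀ t, 0 ≤ t → HasDerivAt p (recF c (p t)) t)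
    {t : ℝ} (ht : 0 ≤ t) (i : L) (x : ∀ i, A i) :
    marginalOn (p t) {i} x = marginalOn (p 0) {i} x := by
  refine eq_of_hasDerivAt_zero (f := fun s => marginalOn (p s) {i} x) (fun s hs => ?_) ht
  convert (hode s hs).marginalOn {i} x using 1
  rw [marginalOn_recF, ← marginalOn_empty (p s) x]
  refine (mul_eq_zero_of_right _ (sum_eq_zero fun J _ => ?_)).symm
  by_cases hiJ : i ∈ J
  · rw [singleton_inter_of_mem hiJ, sdiff_eq_empty_iff_subset.mpr (singleton_subset_iff.mpr hiJ)]
    ring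
  · rw [singleton_inter_of_notMem hiJ, Finset.sdiff_eq_self_iff_disjoint.mpr
      (disjoint_singleton_left.mpr hiJ)]
    ring

lemma marginalOn_pos_of_split (hc : ∀ I, 0 ≤ c I) (hnn : ∀ t, 0 ≤ t → ∀ g, 0 ≤ p t g)
    (hode : ∀ t, 0 ≤ t → HasDerivAt p (recF c (p t)) t)
    (hmass : ∀ t, 0 ≤ t → ∑ g, p t g = 1) {I J : Finset L} (hJ : 0 < c J) {x : ∀ i, A i}
    {t : ℝ} (ht : 0 < t)
    (hsplit : ∀ s ∈ Set.Ioo 0 t, 0 < marginalOn (p s) (I ∩ J) x * marginalOn (p s) (I \ J) x) :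
    0 < marginalOn (p t) I x := by
  refine pos_of_hasDerivAt_of_neg_mul_lt (K := (1 / 2) * ∑ J, c J) ht
    (marginalOn_nonneg (hnn 0 le_rfl) I x) (fun s hs => (hode s hs.1).marginalOn I x)
    fun s hs => ?_
  have hgain : 0 < ∑ J', c J' * (marginalOn (p s) (I ∩ J') x * marginalOn (p s) (I \ J') x) :=
    (mul_pos hJ (hsplit s hs)).trans_le <| single_le_sum (fun J' _ => mul_nonneg (hc J') <|
      mul_nonneg (marginalOn_nonneg (hnn s hs.1.le) _ x) (marginalOn_nonneg (hnn s hs.1.le) _ x))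
      (mem_univ J)
  rw [marginalOn_recF, hmass s hs.1.le]
  simp only [mul_one, mul_sub, sum_sub_distrib, ← sum_mul]
  linarith

lemma marginalOn_pos (hc : ∀ I, 0 ≤ c I)
    (hsep : ∀ i j : L, i ≠ j →
      0 < ∑ I ∈ univ.filter (fun I : Finset L => i ∈ I ∧ j ∉ I), c I)
    (hnn : ∀ t, 0 ≤ t → ∀ g, 0 ≤ p t g)
    (hode : ∀ t, 0 ≤ t → HasDerivAt p (recF c (p t)) t)
    (hmass : ∀ t, 0 ≤ t → ∑ g, p t g = 1)
    (hm : ∀ (i : L) (a : A i), 0 < marg (p 0) i a) (I : Finset L) (x : ∀ i, A i) {t : ℝ}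
    (ht : 0 < t) : 0 < marginalOn (p t) I x := by
  induction I using Finset.strongInduction generalizing t with | _ I ih =>
  rcases I.eq_empty_or_nonempty with rfl | hne
  · rw [marginalOn_empty, hmass t ht.le]
    exact one_pos
  obtain ⟨i, rfl⟩ | ⟨i, hi, j, hj, hij⟩ := hne.exists_eq_singleton_or_nontrivial
  · rw [marginalOn_singleton_eq_of_recF hode ht.le, marginalOn_singleton]
    exact hm i (x i)
  obtain ⟨J, hJmem, hJ⟩ := exists_lt_of_sum_lt (f := fun _ => (0 : ℝ)) (by simpa using hsep i j hij)
  obtain ⟨hiJ, hjJ⟩ := (mem_filter.mp hJmem).2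
  have hinter : I ∩ J ⊂ I :=
    Finset.ssubset_iff_subset_ne.mpr ⟨inter_subset_left, fun h => hjJ (mem_inter.mp (h ▸ hj)).2⟩
  have hdiff : I \ J ⊂ I :=
    Finset.ssubset_iff_subset_ne.mpr ⟨sdiff_subset, fun h => (mem_sdiff.mp (h ▸ hi)).2 hiJ⟩
  exact marginalOn_pos_of_split hc hnn hode hmass hJ ht fun s hs =>
    mul_pos (ih _ hinter hs.1) (ih _ hdiff hs.1)

end Dynamics

theorem positivity_for_positive_times_general
    {L : Type} [Fintype L] [DecidableEq L]
    (A : L → Type) [∀ i, Fintype (A i)] [∀ i, DecidableEq (A i)]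
    (c : Finset L → ℝ) (hc : ∀ I, 0 ≤ c I)
    (hsep : ∀ i j : L, i ≠ j →
      0 < ∑ I ∈ univ.filter (fun I : Finset L => i ∈ I ∧ j ∉ I), c I)
    (p : ℝ → (∀ i, A i) → ℝ)
    (hnn : ∀ t, 0 ≤ t → ∀ g, 0 ≤ p t g)
    (hode : ∀ t, 0 ≤ t → HasDerivAt p (recF c (p t)) t)
    (hp1 : ∑ g : ∀ i, A i, p 0 g = 1)
    (hm : ∀ (i : L) (a : A i), 0 < marg (p 0) i a) :
    ∀ t, 0 < t → ∀ g, 0 < p t g := by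
  intro t ht g
  have hmass : ∀ s, 0 ≤ s → ∑ g, p s g = 1 := fun s hs => (sum_eq_of_recF hode hs).trans hp1
  simpa only [marginalOn_univ] using marginalOn_pos hc hsep hnn hode hmass hm univ g ht

/-- **Recombination immediately produces all gametes.**
Under the standing assumption, if the initial condition of a differentiable nonnegative
solution of the recombination dynamics lies in the simplex `S_𝓖` and has all marginals
positive (all alleles are present in the population), then all gamete frequencies are
strictly positive for all `t > 0`. -/
theorem positivity_for_positive_times
    {L : Type} [Fintype L] [DecidableEq L] [Nonempty L]
    (A : L → Type) [∀ i, Fintype (A i)] [∀ i, DecidableEq (A i)]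
    (hA : ∀ i, 2 ≤ Fintype.card (A i))
    (c : Finset L → ℝ) (hc : ∀ I, 0 ≤ c I) (hcsym : ∀ I, c I = c Iᶜ)
    (hsep : ∀ i j : L, i ≠ j →
      0 < ∑ I ∈ univ.filter (fun I : Finset L => i ∈ I ∧ j ∉ I), c I)
    (p : ℝ → (∀ i, A i) → ℝ)
    (hnn : ∀ t, 0 ≤ t → ∀ g, 0 ≤ p t g)
    (hode : ∀ t, 0 ≤ t → HasDerivAt p (recF c (p t)) t)
    (hp1 : ∑ g : ∀ i, A i, p 0 g = 1)
    (hm : ∀ (i : L) (a : A i), 0 < marg (p 0) i a) :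
    ∀ t, 0 < t → ∀ g, 0 < p t g :=
  positivity_for_positive_times_general A c hc hsep p hnn hode hp1 hm
end
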